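/- Let k ≥ 2 be an integer, m, n nonnegative integers, and define F_k(m, n; x) = ((2m + k − 1)! / (m! · (2m + n + k − 1)! · (k/2)_m)) · (k/(2(k − 1)))^m · (e₂(x))^m (e₁(x))^n e^{−e₁(x)} for x ∈ ℝ^k. Then for every x = (x₁, …, x_k) ∈ (0, ∞)^k with k ≥ 2 (so that e₁(x) > 0 and e₂(x) > 0), the identity F_k(m, n + 1; x) − F_k(m, n; x) = − Σ_{i=1}^k ∂/∂x_i [ (x_i / (2m + n + k)) · F_k(m, n; x) ] holds, where ∂/∂x_i denotes the partial derivative with respect to the i-th coordinate. -/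

import Mathlib

open MeasureTheory Finset

/-- `e₁(x) = ∑ᵢ xᵢ` -/
noncomputable def e1 {k : ℕ} (x : Fin k → ℝ) : ℝ := ∑ i, x i

/-- `e₂(x) = ∑_{i<j} xᵢ xⱼ` -/
noncomputable def e2 {k : ℕ} (x : Fin k → ℝ) : ℝ := ∑ i, ∑ j ∈ Finset.Ioi i, x i * x j

/-- Pochhammer symbol `(y)ₘ = ∏_{i=0}^{m-1} (y + i)` -/
noncomputable def poch (y : ℝ) (m : ℕ) : ℝ := ∏ i ∈ Finset.range m, (y + i)

/-- The WZ integrand `F_k(m, n; x)` of the paper. -/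
noncomputable def F (k m n : ℕ) (x : Fin k → ℝ) : ℝ :=
  ((2 * m + k - 1).factorial : ℝ) /
      ((m.factorial : ℝ) * ((2 * m + n + k - 1).factorial : ℝ) * poch ((k : ℝ) / 2) m) *
    ((k : ℝ) / (2 * ((k : ℝ) - 1))) ^ m * e2 x ^ m * e1 x ^ n * Real.exp (-(e1 x))

/-!
Write `F k m n = c_n · G_n` with `G_n = e₂ᵐ e₁ⁿ e^{-e₁}`. Along the `i`-th coordinate `e₁` has
derivative `1` and `e₂` has derivative `e₁ - xᵢ`, and `∑ᵢ xᵢ (e₁ - xᵢ) = 2 e₂`, so Euler's identity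
for the quasi-homogeneous `G_n` gives `∑ᵢ ∂ᵢ(xᵢ G_n) = (2m + n + k - e₁) G_n`. Since
`G_{n+1} = e₁ G_n` and `c_{n+1} = c_n / (2m + n + k)`, both sides equal `c_n (e₁/(2m+n+k) - 1) G_n`.
-/

open Function

section SymmetricFunctions

variable {k : ℕ} (x : Fin k → ℝ)

theorem sum_mul_e1_sub_self : ∑ i, x i * (e1 x - x i) = 2 * e2 x := by
  have h := sum_sum_Ioi_add_eq_sum_sum_off_diag fun i j : Fin k => x i * x j
  simp only [compl_singleton, sum_erase_eq_sub (mem_univ _)] at h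
  calc ∑ i, x i * (e1 x - x i) = ∑ i, (∑ j, x j * x i - x i * x i) :=
        sum_congr rfl fun i _ => by rw [mul_comm, sub_mul, e1, sum_mul]
    _ = ∑ i, ∑ j ∈ Ioi i, (x j * x i + x i * x j) := h.symm
    _ = 2 * e2 x := by
        rw [e2, mul_sum]
        exact sum_congr rfl fun i _ => by rw [mul_sum]; exact sum_congr rfl fun j _ => by ring

theorem two_mul_e2 : 2 * e2 x = e1 x ^ 2 - ∑ i, x i ^ 2 := by
  rw [← sum_mul_e1_sub_self, e1, sq, sum_mul]
  simp only [mul_sub, sum_sub_distrib, sq]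

theorem e1_update (i : Fin k) (t : ℝ) : e1 (update x i t) = e1 x + (t - x i) := by
  simp only [e1, sum_update_of_mem (mem_univ i), sum_eq_sum_sdiff_singleton_add (mem_univ i) x]
  ring

theorem e2_update (i : Fin k) (t : ℝ) :
    e2 (update x i t) = e2 x + (t - x i) * (e1 x - x i) := by
  have hsq : ∑ j, update x i t j ^ 2 = ∑ j, x j ^ 2 + (t ^ 2 - x i ^ 2) := by
    have hfun : (fun j => update x i t j ^ 2) = update (fun j => x j ^ 2) i (t ^ 2) :=
      funext fun j => apply_update (fun _ y => y ^ 2) x i t j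
    rw [hfun, sum_update_of_mem (mem_univ i),
      sum_eq_sum_sdiff_singleton_add (mem_univ i) (fun j => x j ^ 2)]
    ring
  have := two_mul_e2 (update x i t)
  rw [e1_update, hsq] at this
  linarith [two_mul_e2 x]

theorem hasDerivAt_e1_update (i : Fin k) : HasDerivAt (fun t => e1 (update x i t)) 1 (x i) := by
  simp only [e1_update]
  simpa using ((hasDerivAt_id (x i)).sub_const (x i)).const_add (e1 x)

theorem hasDerivAt_e2_update (i : Fin k) :
    HasDerivAt (fun t => e2 (update x i t)) (e1 x - x i) (x i) := by
  simp only [e2_update]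
  simpa using (((hasDerivAt_id (x i)).sub_const (x i)).mul_const (e1 x - x i)).const_add (e2 x)

end SymmetricFunctions

theorem natCast_mul_pow_pred_mul (m : ℕ) (a : ℝ) : (m : ℝ) * a ^ (m - 1) * a = m * a ^ m := by
  cases m with
  | zero => simp
  | succ p => rw [Nat.add_sub_cancel, pow_succ]; ring

noncomputable def wzCoeff (k m n : ℕ) : ℝ :=
  ((2 * m + k - 1).factorial : ℝ) /
      ((m.factorial : ℝ) * ((2 * m + n + k - 1).factorial : ℝ) * poch ((k : ℝ) / 2) m) *
    ((k : ℝ) / (2 * ((k : ℝ) - 1))) ^ m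

noncomputable def wzKernel {k : ℕ} (m n : ℕ) (x : Fin k → ℝ) : ℝ :=
  e2 x ^ m * e1 x ^ n * Real.exp (-e1 x)

theorem F_eq_wzCoeff_mul_wzKernel (k m n : ℕ) (x : Fin k → ℝ) :
    F k m n x = wzCoeff k m n * wzKernel m n x := by
  simp only [F, wzCoeff, wzKernel]
  ring

theorem wzCoeff_succ {k : ℕ} (hk : 0 < k) (m n : ℕ) :
    wzCoeff k m (n + 1) = wzCoeff k m n / (2 * m + n + k) := by
  have hfact : ((2 * m + (n + 1) + k - 1).factorial : ℝ)
      = (2 * m + n + k) * (2 * m + n + k - 1).factorial := by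
    rw [show 2 * m + (n + 1) + k - 1 = 2 * m + n + k - 1 + 1 by omega, Nat.factorial_succ,
      Nat.sub_add_cancel (by omega)]
    push_cast
    ring
  simp only [wzCoeff, hfact]
  field_simp

theorem wzKernel_succ {k : ℕ} (m n : ℕ) (x : Fin k → ℝ) :
    wzKernel m (n + 1) x = e1 x * wzKernel m n x := by
  simp only [wzKernel]
  ring

section Euler

variable {k : ℕ} (m n : ℕ) (x : Fin k → ℝ)

theorem hasDerivAt_wzKernel_update (i : Fin k) :
    HasDerivAt (fun t => wzKernel m n (update x i t))
      ((e1 x - x i) * (m * e2 x ^ (m - 1) * e1 x ^ n * Real.exp (-e1 x))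
        + (n * e2 x ^ m * e1 x ^ (n - 1) * Real.exp (-e1 x) - wzKernel m n x)) (x i) := by
  have hE := hasDerivAt_e2_update x i
  have hS := hasDerivAt_e1_update x i
  refine (((hE.pow m).mul (hS.pow n)).mul hS.neg.exp).congr_deriv ?_
  simp only [Pi.mul_apply, Pi.pow_apply, Pi.neg_apply, update_eq_self, wzKernel]
  ring

theorem sum_deriv_mul_wzKernel_update :
    ∑ i, deriv (fun t => t * wzKernel m n (update x i t)) (x i)
      = (2 * m + n + k - e1 x) * wzKernel m n x := by
  have hterm : ∀ i, deriv (fun t => t * wzKernel m n (update x i t)) (x i)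
      = wzKernel m n x
        + x i * (e1 x - x i) * (m * e2 x ^ (m - 1) * e1 x ^ n * Real.exp (-e1 x))
        + x i * (n * e2 x ^ m * e1 x ^ (n - 1) * Real.exp (-e1 x) - wzKernel m n x) := by
    intro i
    refine ((hasDerivAt_id' (x i)).mul (hasDerivAt_wzKernel_update m n x i)).deriv.trans ?_
    simp only [one_mul, update_eq_self]
    ring
  rw [sum_congr rfl fun i _ => hterm i, sum_add_distrib, sum_add_distrib, ← sum_mul, ← sum_mul,
    sum_mul_e1_sub_self, sum_const, card_univ, Fintype.card_fin, nsmul_eq_mul]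
  change _ + _ + e1 x * _ = _
  have hm := natCast_mul_pow_pred_mul m (e2 x)
  have hn := natCast_mul_pow_pred_mul n (e1 x)
  simp only [wzKernel]
  linear_combination (2 * e1 x ^ n * Real.exp (-e1 x)) * hm
    + (e2 x ^ m * Real.exp (-e1 x)) * hn

end Euler

theorem stmt3_general (k m n : ℕ) (hk : 2 ≤ k) (x : Fin k → ℝ) :
    F k m (n + 1) x - F k m n x =
      - ∑ i : Fin k,
          deriv (fun t : ℝ =>
            t / (2 * (m : ℝ) + n + k) * F k m n (Function.update x i t)) (x i) := by
  have hterm : ∀ i, deriv (fun t => t / (2 * m + n + k) * F k m n (update x i t)) (x i)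
      = wzCoeff k m n / (2 * m + n + k) * deriv (fun t => t * wzKernel m n (update x i t)) (x i) := by
    intro i
    rw [← deriv_const_mul_field]
    congr 1
    funext t
    rw [F_eq_wzCoeff_mul_wzKernel]
    ring
  rw [sum_congr rfl fun i _ => hterm i, ← mul_sum, sum_deriv_mul_wzKernel_update,
    F_eq_wzCoeff_mul_wzKernel, F_eq_wzCoeff_mul_wzKernel, wzCoeff_succ (by omega), wzKernel_succ]
  field_simp
  ring

/-- (WZ 1): `F_k(m,n+1;x) - F_k(m,n;x) = -∑ᵢ ∂/∂xᵢ [ (xᵢ/(2m+n+k)) F_k(m,n;x) ]`. -/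
theorem stmt3 (k m n : ℕ) (hk : 2 ≤ k) (x : Fin k → ℝ) (hx : ∀ i, 0 < x i) :
    F k m (n + 1) x - F k m n x =
      - ∑ i : Fin k,
          deriv (fun t : ℝ =>
            t / (2 * (m : ℝ) + n + k) * F k m n (Function.update x i t)) (x i) :=
  stmt3_general k m n hk x
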